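/- Assume λ⁺_m ≥ n. Then T is a Littlewood–Richardson tableau (i.e. T is semistandard and w(T) is a lattice word) if and only if T⁺ is marked (i.e. T⁺ is semistandard and Rp(T⁺) is anti-semistandard). In other words, T ∈ LR(λ′/μ′, ν) if and only if T⁺ ∈ M((λ⁺)′/μ′, ν/ω). -/

import Mathlib

noncomputable section

/-- A partition, written 1-based: `α i` is the length of row `i` for `i ≥ 1`
(we normalize `α 0 = 0`); it is weakly decreasing and eventually zero. -/
def IsPartition (α : ℕ → ℕ) : Prop :=
  α 0 = 0 ∧ (∀ i j, 1 ≤ i → i ≤ j → α j ≤ α i) ∧ ∃ N, ∀ i, N ≤ i → α i = 0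

/-- The set of cells of the skew diagram `α/β` (rows and columns 1-based):
`(i,j)` with `β i < j ≤ α i`. -/
def cellOf (α β : ℕ → ℕ) : Set (ℕ × ℕ) := {p | β p.1 < p.2 ∧ p.2 ≤ α p.1}

/-- The conjugate partition (1-based): `(conjP α) j = #{i ≥ 1 | α i ≥ j}` for `j ≥ 1`. -/
def conjP (α : ℕ → ℕ) (j : ℕ) : ℕ := Set.ncard {i : ℕ | 1 ≤ i ∧ 1 ≤ j ∧ j ≤ α i}

/-- Semistandard skew tableau: entries weakly increase along rows (left to right) and
strictly increase down columns. -/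
def IsSSkew (α β : ℕ → ℕ) (T : ℕ × ℕ → ℕ) : Prop :=
  (∀ i j j', (i, j) ∈ cellOf α β → (i, j') ∈ cellOf α β → j ≤ j' → T (i, j) ≤ T (i, j')) ∧
  (∀ i i' j, (i, j) ∈ cellOf α β → (i', j) ∈ cellOf α β → i < i' → T (i, j) < T (i', j))

/-- Anti-semistandard skew tableau: entries strictly decrease along rows (left to right)
and weakly decrease down columns. -/
def IsAntiSSkew (α β : ℕ → ℕ) (T : ℕ × ℕ → ℕ) : Prop :=
  (∀ i j j', (i, j) ∈ cellOf α β → (i, j') ∈ cellOf α β → j < j' → T (i, j') < T (i, j)) ∧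
  (∀ i i' j, (i, j) ∈ cellOf α β → (i', j) ∈ cellOf α β → i ≤ i' → T (i', j) ≤ T (i, j))

/-- `wle p q` : cell `p` comes weakly before cell `q` in the reading order of the reading
word (rows top to bottom, inside each row right to left). -/
def wle (p q : ℕ × ℕ) : Prop := p.1 < q.1 ∨ (p.1 = q.1 ∧ q.2 ≤ p.2)

/-- Number of occurrences of the symbol `v` among the cells weakly before `x` in the
reading word of `T` (so "the `j`-th occurrence of `v` in `w(T)` is at the cell `x`" reads
`x ∈ cellOf α β ∧ T x = v ∧ occBefore α β T v x = j`). -/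
def occBefore (α β : ℕ → ℕ) (T : ℕ × ℕ → ℕ) (v : ℕ) (x : ℕ × ℕ) : ℕ :=
  Set.ncard {p | p ∈ cellOf α β ∧ wle p x ∧ T p = v}

/-- Total number of occurrences of the symbol `v` in the skew tableau `T`. -/
def occCount (α β : ℕ → ℕ) (T : ℕ × ℕ → ℕ) (v : ℕ) : ℕ :=
  Set.ncard {p | p ∈ cellOf α β ∧ T p = v}

/-- The reading word of `T` is a lattice word for the symbols `base, base+1, …` :
in every initial segment, `v+1` occurs at most as often as `v`, for every `v ≥ base`. -/
def IsLatticeFrom (α β : ℕ → ℕ) (T : ℕ × ℕ → ℕ) (base : ℕ) : Prop :=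
  ∀ x ∈ cellOf α β, ∀ v, base ≤ v → occBefore α β T (v + 1) x ≤ occBefore α β T v x

/-- `T` (with symbols `m+1, m+2, …`) is shifted Yamanouchi with respect to the shift `ω`:
for every initial segment `w′` of the reading word and every `i ≥ 1`,
`ω i + a_i(w′) ≥ ω (i+1) + a_{i+1}(w′)`. -/
def ShiftedYam (α β : ℕ → ℕ) (m : ℕ) (ω : ℕ → ℕ) (T : ℕ × ℕ → ℕ) : Prop :=
  ∀ x ∈ cellOf α β, ∀ i, 1 ≤ i →
    ω (i + 1) + occBefore α β T (m + i + 1) x ≤ ω i + occBefore α β T (m + i) x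

/-- `Tm = Rp(Tp)` : if the `j`-th occurrence of the symbol `m+i` in the reading word of
`Tp` lies in column `c` of `Tp`, then the entry of `Tm` at the cell `(i, ω i + j)` is `c`. -/
def IsRp (α β : ℕ → ℕ) (m : ℕ) (ω : ℕ → ℕ) (Tp Tm : ℕ × ℕ → ℕ) : Prop :=
  ∀ x ∈ cellOf α β, ∀ i, 1 ≤ i → Tp x = m + i →
    Tm (i, ω i + occBefore α β Tp (m + i) x) = x.2

/-- `λ⁺` : the first `m` rows of `λ`. -/
def lamPlus (m : ℕ) (la : ℕ → ℕ) : ℕ → ℕ := fun i => if i ≤ m then la i else 0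

/-- `λ⁻` : the conjugate of the partition `(λ_{m+1}, λ_{m+2}, …)`. -/
def lamMinus (m : ℕ) (la : ℕ → ℕ) : ℕ → ℕ :=
  conjP (fun i => if 1 ≤ i then la (m + i) else 0)

/-!
The cells of `λ′/μ′` in the columns `> m` form `λ′/(λ⁺)′`, whose row `i` is filled with `ω i`
copies of `m + i`; the rest is `T⁺`. In a semistandard tableau the successive occurrences of a
symbol in the reading word move strictly to the left, so the `k`-th occurrence of `v` lies in a
column `≥ C` iff at least `k` copies of `v` lie in the columns `≥ C`. Hence the rows of `Rp(T⁺)`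
always decrease strictly, and its columns decrease weakly iff for all `i` and `C`
  `ω (i + 1) + #{m + i + 1 in the columns ≥ C of T⁺} ≤ ω i + #{m + i in the columns ≥ C of T⁺}`.
Adding the canonical cells, this is the dominance of `m + i` over `m + i + 1` in every suffix of
columns of `T`, which follows from the lattice property of `w(T)` by induction on occurrences.
Conversely it gives the shifted Yamanouchi inequality for every prefix of `w(T⁺)`; together with
the bound `T⁺(r, c) ≤ m + r`, which `λ⁺_m ≥ n` forces by strictness down the columns, this yields
semistandardness of `T` and the lattice property of `w(T)`.
-/

theorem wle_refl (p : ℕ × ℕ) : wle p p := by unfold wle; omega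

theorem wle_trans {p q r : ℕ × ℕ} (h₁ : wle p q) (h₂ : wle q r) : wle p r := by
  unfold wle at *; omega

theorem wle_total (p q : ℕ × ℕ) : wle p q ∨ wle q p := by unfold wle; omega

theorem wle_antisymm {p q : ℕ × ℕ} (h₁ : wle p q) (h₂ : wle q p) : p = q := by
  unfold wle at *; ext <;> omega

theorem Nat.eq_of_forall_pos_le_iff {a b : ℕ} (h : ∀ i, 1 ≤ i → (i ≤ a ↔ i ≤ b)) : a = b :=
  eq_of_forall_le_iff fun c => by rcases c with _ | c <;> simp [h]

section Partition

variable {α β : ℕ → ℕ}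

theorem IsPartition.antitone (hα : IsPartition α) {i j : ℕ} (hi : 1 ≤ i) (hij : i ≤ j) :
    α j ≤ α i :=
  hα.2.1 i j hi hij

theorem conjP_zero (α : ℕ → ℕ) : conjP α 0 = 0 := by simp [conjP]

theorem IsPartition.finite_setOf_le (hα : IsPartition α) (j : ℕ) :
    {i | 1 ≤ i ∧ 1 ≤ j ∧ j ≤ α i}.Finite := by
  obtain ⟨N, hN⟩ := hα.2.2
  refine (Set.finite_Iio N).subset fun i ⟨_, hj, hi⟩ => ?_
  by_contra h
  have := hN i (not_lt.1 h)
  omega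

theorem IsPartition.le_conjP_iff (hα : IsPartition α) {i j : ℕ} (hi : 1 ≤ i) (hj : 1 ≤ j) :
    i ≤ conjP α j ↔ j ≤ α i := by
  constructor
  · intro h
    by_contra hji
    have hsub : {i | 1 ≤ i ∧ 1 ≤ j ∧ j ≤ α i} ⊆ Set.Icc 1 (i - 1) := fun k ⟨hk, _, hjk⟩ =>
      ⟨hk, by by_contra hk'; exact hji (hjk.trans (hα.antitone hi (by omega)))⟩
    have := Set.ncard_le_ncard hsub
    simp only [Set.ncard_Icc_nat] at this
    rw [conjP] at h
    omega
  · intro h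
    have hsub : Set.Icc 1 i ⊆ {i | 1 ≤ i ∧ 1 ≤ j ∧ j ≤ α i} := fun k ⟨hk, hki⟩ =>
      ⟨hk, hj, h.trans (hα.antitone hk hki)⟩
    simpa [conjP] using Set.ncard_le_ncard hsub (hα.finite_setOf_le j)

theorem isPartition_conjP (hα : IsPartition α) : IsPartition (conjP α) := by
  refine ⟨conjP_zero α, fun i j hi hij => ?_, α 1 + 1, fun j hj => ?_⟩
  · exact Set.ncard_le_ncard (fun k ⟨hk, _, hjk⟩ => ⟨hk, hi, hij.trans hjk⟩)
      (hα.finite_setOf_le i)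
  · have hempty : {k | 1 ≤ k ∧ 1 ≤ j ∧ j ≤ α k} = ∅ := by
      ext k
      simp only [Set.mem_ofPred_eq, Set.mem_empty_iff_false, iff_false]
      rintro ⟨hk, -, hjk⟩
      have := hα.antitone le_rfl hk
      omega
    rw [conjP, hempty, Set.ncard_empty]

theorem IsPartition.conjP_le_conjP (hβ : IsPartition β) (h : ∀ i, α i ≤ β i) (j : ℕ) :
    conjP α j ≤ conjP β j :=
  Set.ncard_le_ncard (fun k ⟨hk, hj, hjk⟩ => ⟨hk, hj, hjk.trans (h k)⟩) (hβ.finite_setOf_le j)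

theorem lamPlus_le (m : ℕ) (la : ℕ → ℕ) (i : ℕ) : lamPlus m la i ≤ la i := by
  unfold lamPlus; split_ifs <;> omega

variable {m : ℕ} {la : ℕ → ℕ}

theorem isPartition_lamPlus (hla : IsPartition la) : IsPartition (lamPlus m la) := by
  obtain ⟨h0, hmono, N, hN⟩ := hla
  refine ⟨by simp [lamPlus, h0], fun i j hi hij => ?_, N, fun i hi => ?_⟩
  · unfold lamPlus
    split_ifs <;> first | omega | exact hmono i j hi hij
  · simp [lamPlus, hN i hi]

theorem isPartition_tail (hla : IsPartition la) :
    IsPartition fun i => if 1 ≤ i then la (m + i) else 0 := by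
  obtain ⟨N, hN⟩ := hla.2.2
  refine ⟨by simp, fun i j hi hij => ?_, N, fun i hi => ?_⟩
  · simp only [hi, hi.trans hij, if_true]
    exact hla.antitone (by omega) (by omega)
  · simp [hN (m + i) (by omega)]

theorem isPartition_lamMinus (hla : IsPartition la) : IsPartition (lamMinus m la) :=
  isPartition_conjP (isPartition_tail hla)

theorem conjP_lamPlus (hla : IsPartition la) {j : ℕ} (hj : 1 ≤ j) :
    conjP (lamPlus m la) j = min (conjP la j) m := by
  refine Nat.eq_of_forall_pos_le_iff fun i hi => ?_
  rw [(isPartition_lamPlus hla).le_conjP_iff hi hj, lamPlus, le_min_iff, hla.le_conjP_iff hi hj]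
  split_ifs <;> omega

theorem lamMinus_eq (hla : IsPartition la) {j : ℕ} (hj : 1 ≤ j) :
    lamMinus m la j = conjP la j - m := by
  refine Nat.eq_of_forall_pos_le_iff fun i hi => ?_
  rw [lamMinus, (isPartition_tail hla).le_conjP_iff hi hj, if_pos hi,
    ← hla.le_conjP_iff (by omega) hj]
  omega

end Partition

section SkewDiagram

variable {α β γ : ℕ → ℕ}

theorem one_le_fst_of_mem_cellOf (hα : α 0 = 0) {p : ℕ × ℕ} (hp : p ∈ cellOf α β) : 1 ≤ p.1 := by
  by_contra h
  obtain ⟨h₁, h₂⟩ := hp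
  rw [show p.1 = 0 by omega, hα] at h₂
  omega

theorem IsPartition.finite_cellOf (hα : IsPartition α) (β : ℕ → ℕ) : (cellOf α β).Finite := by
  obtain ⟨N, hN⟩ := hα.2.2
  refine ((Set.finite_Iio N).prod (Set.finite_Iic (α 1))).subset fun p hp => ?_
  have hp1 := one_le_fst_of_mem_cellOf hα.1 hp
  obtain ⟨h₁, h₂⟩ := hp
  refine ⟨Set.mem_Iio.2 (by by_contra h; have := hN p.1 (by omega); omega), ?_⟩
  exact Set.mem_Iic.2 (h₂.trans (hα.antitone le_rfl hp1))

theorem corner_mem_cellOf (hα : IsPartition α) {p q : ℕ × ℕ} (hp : p ∈ cellOf α β)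
    (hq : q ∈ cellOf α β) (h₁ : p.1 ≤ q.1) (h₂ : p.2 ≤ q.2) : (p.1, q.2) ∈ cellOf α β :=
  ⟨by have := hp.1; simp only; omega,
    hq.2.trans (hα.antitone (show 1 ≤ p.1 from one_le_fst_of_mem_cellOf hα.1 hp) h₁)⟩

theorem mem_cellOf_of_le_of_le (hα : IsPartition α) (hβ : IsPartition β) {r r' s c : ℕ}
    (hr : (r, c) ∈ cellOf α β) (hr' : (r', c) ∈ cellOf α β) (hs : r ≤ s) (hs' : s ≤ r') :
    (s, c) ∈ cellOf α β := by
  have h1 := one_le_fst_of_mem_cellOf hα.1 hr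
  exact ⟨(hβ.antitone h1 hs).trans_lt hr.1, hr'.2.trans (hα.antitone (by omega) hs')⟩

theorem ncard_cellOf_sep_eq_add (hfin : (cellOf α β).Finite) (hβγ : ∀ i, β i ≤ γ i)
    (hγα : ∀ i, γ i ≤ α i) (Q : ℕ × ℕ → Prop) :
    {p | p ∈ cellOf α β ∧ Q p}.ncard
      = {p | p ∈ cellOf γ β ∧ Q p}.ncard + {p | p ∈ cellOf α γ ∧ Q p}.ncard := by
  have hunion : {p | p ∈ cellOf α β ∧ Q p}
      = {p | p ∈ cellOf γ β ∧ Q p} ∪ {p | p ∈ cellOf α γ ∧ Q p} := by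
    ext p
    simp only [cellOf, Set.mem_union, Set.mem_ofPred_eq]
    have := hβγ p.1
    have := hγα p.1
    constructor
    · rintro ⟨⟨h₁, h₂⟩, hQ⟩
      by_cases h : p.2 ≤ γ p.1
      exacts [Or.inl ⟨⟨h₁, h⟩, hQ⟩, Or.inr ⟨⟨by omega, h₂⟩, hQ⟩]
    · rintro (⟨⟨h₁, h₂⟩, hQ⟩ | ⟨⟨h₁, h₂⟩, hQ⟩)
      exacts [⟨⟨h₁, by omega⟩, hQ⟩, ⟨⟨by omega, h₂⟩, hQ⟩]
  rw [hunion, Set.ncard_union_eq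
    (Set.disjoint_left.2 fun p h₁ h₂ => by have := h₁.1.2; have := h₂.1.1; omega)
    (hfin.subset fun p hp => ⟨hp.1.1, hp.1.2.trans (hγα _)⟩)
    (hfin.subset fun p hp => ⟨(hβγ _).trans_lt hp.1.1, hp.1.2⟩)]

theorem ncard_cellOf_row (α β : ℕ → ℕ) (i : ℕ) :
    {p | p ∈ cellOf α β ∧ p.1 = i}.ncard = α i - β i := by
  have : {p | p ∈ cellOf α β ∧ p.1 = i} = (fun c => (i, c)) '' Set.Ioc (β i) (α i) := by
    ext ⟨r, c⟩
    simp only [cellOf, Set.mem_ofPred_eq, Set.mem_image, Set.mem_Ioc, Prod.mk.injEq]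
    constructor
    · rintro ⟨⟨h₁, h₂⟩, rfl⟩
      exact ⟨c, ⟨h₁, h₂⟩, rfl, rfl⟩
    · rintro ⟨c, hc, rfl, rfl⟩
      exact ⟨hc, rfl⟩
  rw [this, Set.ncard_image_of_injective _ (Prod.mk_right_injective i), Set.ncard_Ioc_nat]

end SkewDiagram

section Semistandard

variable {α β : ℕ → ℕ} {T : ℕ × ℕ → ℕ}

theorem IsSSkew.add_le_of_mem (hT : IsSSkew α β T) (hα : IsPartition α) (hβ : IsPartition β)
    {r c : ℕ} (hr : (r, c) ∈ cellOf α β) :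
    ∀ d, (r + d, c) ∈ cellOf α β → T (r, c) + d ≤ T (r + d, c)
  | 0, _ => le_rfl
  | d + 1, hd => by
    have hmid := mem_cellOf_of_le_of_le hα hβ hr hd (Nat.le_add_right r d) (by omega)
    have := hT.2 _ _ c hmid hd (by omega)
    have := hT.add_le_of_mem hα hβ hr d hmid
    omega

/-- Otherwise the cell in the row of `z` and the column of `p` would break semistandardness. -/
theorem IsSSkew.wle_of_le_of_snd_le (hT : IsSSkew α β T) (hα : IsPartition α) {p z : ℕ × ℕ}
    (hp : p ∈ cellOf α β) (hz : z ∈ cellOf α β) (hTpz : T p ≤ T z) (hcol : z.2 ≤ p.2) :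
    wle p z := by
  by_contra h
  have hlt : z.1 < p.1 := by unfold wle at h; omega
  have hy := corner_mem_cellOf hα hz hp hlt.le hcol
  have h₁ := hT.1 z.1 z.2 p.2 hz hy hcol
  have h₂ := hT.2 z.1 p.1 p.2 hy hp hlt
  simp only [Prod.mk.eta] at h₁ h₂
  omega

theorem IsSSkew.mono_left (hT : IsSSkew α β T) {γ : ℕ → ℕ} (h : ∀ i, γ i ≤ α i) :
    IsSSkew γ β T :=
  ⟨fun i j j' hj hj' => hT.1 i j j' ⟨hj.1, hj.2.trans (h i)⟩ ⟨hj'.1, hj'.2.trans (h i)⟩,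
    fun i i' j hi hi' => hT.2 i i' j ⟨hi.1, hi.2.trans (h i)⟩ ⟨hi'.1, hi'.2.trans (h i')⟩⟩

end Semistandard

section Occurrences

variable {α β : ℕ → ℕ} {T : ℕ × ℕ → ℕ} {v : ℕ}

theorem occBefore_mono (hfin : (cellOf α β).Finite) {x y : ℕ × ℕ} (h : wle x y) (v : ℕ) :
    occBefore α β T v x ≤ occBefore α β T v y :=
  Set.ncard_le_ncard (fun _ hp => ⟨hp.1, wle_trans hp.2.1 h, hp.2.2⟩)
    (hfin.subset fun _ hp => hp.1)

theorem occBefore_lt_occBefore (hfin : (cellOf α β).Finite) {x z : ℕ × ℕ}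
    (hz : z ∈ cellOf α β) (hTz : T z = v) (hxz : wle x z) (hne : x ≠ z) :
    occBefore α β T v x < occBefore α β T v z := by
  refine Set.ncard_lt_ncard ⟨fun _ hp => ⟨hp.1, wle_trans hp.2.1 hxz, hp.2.2⟩, fun hsub => ?_⟩
    (hfin.subset fun _ hp => hp.1)
  exact hne (wle_antisymm hxz (hsub ⟨hz, wle_refl z, hTz⟩).2.1)

theorem one_le_occBefore (hfin : (cellOf α β).Finite) {z : ℕ × ℕ} (hz : z ∈ cellOf α β)
    (hTz : T z = v) : 1 ≤ occBefore α β T v z :=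
  (Set.ncard_pos (hfin.subset fun _ hp => hp.1)).2 ⟨z, hz, wle_refl z, hTz⟩

theorem occBefore_le_occCount (hfin : (cellOf α β).Finite) (v : ℕ) (x : ℕ × ℕ) :
    occBefore α β T v x ≤ occCount α β T v :=
  Set.ncard_le_ncard (fun _ hp => ⟨hp.1, hp.2.2⟩) (hfin.subset fun _ hp => hp.1)

theorem eq_of_occBefore_eq (hfin : (cellOf α β).Finite) {z₁ z₂ : ℕ × ℕ}
    (h₁ : z₁ ∈ cellOf α β) (hT₁ : T z₁ = v) (h₂ : z₂ ∈ cellOf α β) (hT₂ : T z₂ = v)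
    (h : occBefore α β T v z₁ = occBefore α β T v z₂) : z₁ = z₂ := by
  by_contra hne
  rcases wle_total z₁ z₂ with h12 | h21
  · exact (occBefore_lt_occBefore hfin h₂ hT₂ h12 hne).ne h
  · exact (occBefore_lt_occBefore hfin h₁ hT₁ h21 (Ne.symm hne)).ne h.symm

/-- Pigeonhole: `occBefore` is injective on the occurrences of `v`. -/
theorem exists_mem_occBefore_eq (hfin : (cellOf α β).Finite) {S : Set (ℕ × ℕ)}
    (hS : ∀ p ∈ S, p ∈ cellOf α β ∧ T p = v ∧ occBefore α β T v p ≤ S.ncard) {k : ℕ}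
    (hk₁ : 1 ≤ k) (hk : k ≤ S.ncard) : ∃ z ∈ S, occBefore α β T v z = k := by
  obtain ⟨z, hz, hzk⟩ := Set.surj_on_of_inj_on_of_ncard_le (t := Set.Icc 1 S.ncard)
    (fun p _ => occBefore α β T v p)
    (fun p hp => ⟨one_le_occBefore hfin (hS p hp).1 (hS p hp).2.1, (hS p hp).2.2⟩)
    (fun p q hp hq => eq_of_occBefore_eq hfin (hS p hp).1 (hS p hp).2.1 (hS q hq).1 (hS q hq).2.1)
    (by simp) (Set.finite_Icc _ _) k ⟨hk₁, hk⟩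
  exact ⟨z, hz, hzk.symm⟩

theorem exists_occBefore_eq (hfin : (cellOf α β).Finite) {x : ℕ × ℕ} {k : ℕ} (hk₁ : 1 ≤ k)
    (hk : k ≤ occBefore α β T v x) :
    ∃ z ∈ cellOf α β, T z = v ∧ wle z x ∧ occBefore α β T v z = k := by
  obtain ⟨z, ⟨hz, hzx, hTz⟩, hzk⟩ := exists_mem_occBefore_eq hfin
    (S := {p | p ∈ cellOf α β ∧ wle p x ∧ T p = v})
    (fun p hp => ⟨hp.1, hp.2.2, occBefore_mono hfin hp.2.1 v⟩) hk₁ hk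
  exact ⟨z, hz, hTz, hzx, hzk⟩

theorem exists_occBefore_eq_of_le_occCount (hfin : (cellOf α β).Finite) {k : ℕ} (hk₁ : 1 ≤ k)
    (hk : k ≤ occCount α β T v) : ∃ z ∈ cellOf α β, T z = v ∧ occBefore α β T v z = k := by
  obtain ⟨z, ⟨hz, hTz⟩, hzk⟩ := exists_mem_occBefore_eq hfin
    (S := {p | p ∈ cellOf α β ∧ T p = v})
    (fun p hp => ⟨hp.1, hp.2, occBefore_le_occCount hfin v p⟩) hk₁ hk
  exact ⟨z, hz, hTz, hzk⟩

theorem occBefore_eq_zero_of_lt {m i : ℕ} (hbound : ∀ p ∈ cellOf α β, T p ≤ m + p.1)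
    {x : ℕ × ℕ} (hx : x.1 < i) : occBefore α β T (m + i) x = 0 := by
  have : {p | p ∈ cellOf α β ∧ wle p x ∧ T p = m + i} = ∅ :=
    Set.eq_empty_of_forall_notMem fun p ⟨hp, hpx, hTp⟩ => by
      have := hbound p hp
      unfold wle at hpx
      omega
  rw [occBefore, this, Set.ncard_empty]

end Occurrences

def occFromCol (α β : ℕ → ℕ) (T : ℕ × ℕ → ℕ) (v C : ℕ) : ℕ :=
  Set.ncard {p | p ∈ cellOf α β ∧ T p = v ∧ C ≤ p.2}

section ColumnCounts

variable {α β : ℕ → ℕ} {T : ℕ × ℕ → ℕ} {v : ℕ}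

theorem occFromCol_antitone (hfin : (cellOf α β).Finite) (v : ℕ) {C C' : ℕ} (h : C ≤ C') :
    occFromCol α β T v C' ≤ occFromCol α β T v C :=
  Set.ncard_le_ncard (fun _ hp => ⟨hp.1, hp.2.1, h.trans hp.2.2⟩) (hfin.subset fun _ hp => hp.1)

theorem IsSSkew.snd_le_of_wle (hT : IsSSkew α β T) (hα : IsPartition α) {p z : ℕ × ℕ}
    (hp : p ∈ cellOf α β) (hz : z ∈ cellOf α β) (hTpz : T p = T z) (h : wle p z) : z.2 ≤ p.2 := by
  by_contra hlt
  have := wle_antisymm h (hT.wle_of_le_of_snd_le hα hz hp hTpz.ge (by omega))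
  subst this
  omega

theorem IsSSkew.occFromCol_le_occBefore (hT : IsSSkew α β T) (hα : IsPartition α) {z : ℕ × ℕ}
    (hz : z ∈ cellOf α β) (hv : v ≤ T z) : occFromCol α β T v z.2 ≤ occBefore α β T v z :=
  Set.ncard_le_ncard
    (fun _ ⟨hp, hTp, hcol⟩ => ⟨hp, hT.wle_of_le_of_snd_le hα hp hz (hTp ▸ hv) hcol, hTp⟩)
    ((hα.finite_cellOf β).subset fun _ hp => hp.1)

theorem IsSSkew.occBefore_le_occFromCol (hT : IsSSkew α β T) (hα : IsPartition α) {z : ℕ × ℕ}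
    (hz : z ∈ cellOf α β) (hTz : T z = v) {C : ℕ} (hC : C ≤ z.2) :
    occBefore α β T v z ≤ occFromCol α β T v C :=
  Set.ncard_le_ncard
    (fun _ ⟨hp, hpz, hTp⟩ =>
      ⟨hp, hTp, hC.trans (hT.snd_le_of_wle hα hp hz (hTp.trans hTz.symm) hpz)⟩)
    ((hα.finite_cellOf β).subset fun _ hp => hp.1)

theorem IsSSkew.occFromCol_lt_occBefore (hT : IsSSkew α β T) (hα : IsPartition α) {z : ℕ × ℕ}
    (hz : z ∈ cellOf α β) (hTz : T z = v) {C : ℕ} (hC : z.2 < C) :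
    occFromCol α β T v C < occBefore α β T v z :=
  calc occFromCol α β T v C < occFromCol α β T v z.2 :=
        Set.ncard_lt_ncard
          ⟨fun _ hp => ⟨hp.1, hp.2.1, by have := hp.2.2; omega⟩,
            fun h => by have := (h ⟨hz, hTz, le_rfl⟩).2.2; omega⟩
          ((hα.finite_cellOf β).subset fun _ hp => hp.1)
    _ ≤ occBefore α β T v z := hT.occFromCol_le_occBefore hα hz hTz.ge

/-- The occurrences of `v` weakly before an occurrence `z` in the reading word are exactly those
in the columns `z.2, z.2 + 1, …`. -/
theorem IsSSkew.occBefore_le_occFromCol_iff (hT : IsSSkew α β T) (hα : IsPartition α)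
    {z : ℕ × ℕ} (hz : z ∈ cellOf α β) (hTz : T z = v) {C : ℕ} :
    occBefore α β T v z ≤ occFromCol α β T v C ↔ C ≤ z.2 :=
  ⟨fun h => not_lt.1 fun hC => (hT.occFromCol_lt_occBefore hα hz hTz hC).not_ge h,
    hT.occBefore_le_occFromCol hα hz hTz⟩

theorem IsSSkew.snd_lt_of_occBefore_lt (hT : IsSSkew α β T) (hα : IsPartition α)
    {z₁ z₂ : ℕ × ℕ} (h₁ : z₁ ∈ cellOf α β) (hT₁ : T z₁ = v) (h₂ : z₂ ∈ cellOf α β)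
    (hT₂ : T z₂ = v) (h : occBefore α β T v z₁ < occBefore α β T v z₂) : z₂.2 < z₁.2 := by
  by_contra hle
  have := hT.occBefore_le_occFromCol hα h₂ hT₂ (C := z₁.2) (by omega)
  have := hT.occFromCol_le_occBefore hα h₁ hT₁.ge
  omega

/-- Otherwise the `k`-th occurrence `z'` of `v` lies strictly left of `z`, hence in a higher row,
and the cell of that row in the column of `z` holds an earlier `v`, which contradicts the induction
hypothesis for the matching earlier occurrence of `v + 1`. -/
theorem IsSSkew.occBefore_succ_le_occFromCol (hT : IsSSkew α β T) (hα : IsPartition α)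
    (hlat : ∀ x ∈ cellOf α β, occBefore α β T (v + 1) x ≤ occBefore α β T v x) (k : ℕ) :
    ∀ z ∈ cellOf α β, T z = v + 1 → occBefore α β T (v + 1) z = k →
      k ≤ occFromCol α β T v z.2 := by
  have hfin := hα.finite_cellOf β
  induction k using Nat.strong_induction_on with
  | _ k ih =>
  intro z hz hTz hzk
  by_contra hlt
  obtain ⟨z', hz', hTz', hz'z, hz'k⟩ :=
    exists_occBefore_eq hfin (hzk ▸ one_le_occBefore hfin hz hTz) (hzk ▸ hlat z hz)
  have hcol : z'.2 < z.2 := by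
    by_contra h
    have := hT.occBefore_le_occFromCol hα hz' hTz' (C := z.2) (by omega)
    omega
  have hrow : z'.1 < z.1 := by unfold wle at hz'z; omega
  have hy : (z'.1, z.2) ∈ cellOf α β := corner_mem_cellOf hα hz' hz hrow.le hcol.le
  have hTy : T (z'.1, z.2) = v := by
    have h₁ := hT.1 z'.1 z'.2 z.2 hz' hy hcol.le
    have h₂ := hT.2 z'.1 z.1 z.2 hy hz hrow
    simp only [Prod.mk.eta] at h₁ h₂
    omega
  have hyk : occBefore α β T v (z'.1, z.2) < k :=
    hz'k ▸ occBefore_lt_occBefore hfin hz' hTz' (Or.inr ⟨rfl, hcol.le⟩)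
      fun h => by simp only [Prod.ext_iff] at h; omega
  obtain ⟨w, hw, hTw, -, hwk⟩ :=
    exists_occBefore_eq hfin (one_le_occBefore hfin hy hTy) (hyk.le.trans hzk.ge)
  have hzw : z.2 < w.2 := hT.snd_lt_of_occBefore_lt hα hw hTw hz hTz (by omega)
  have hwz : w.2 ≤ z.2 := (hT.occBefore_le_occFromCol_iff hα hy hTy).1 (ih _ hyk w hw hTw hwk)
  omega

theorem IsSSkew.occFromCol_succ_le (hT : IsSSkew α β T) (hα : IsPartition α)
    (hlat : ∀ x ∈ cellOf α β, occBefore α β T (v + 1) x ≤ occBefore α β T v x) (C : ℕ) :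
    occFromCol α β T (v + 1) C ≤ occFromCol α β T v C := by
  have hfin := hα.finite_cellOf β
  set S := {p | p ∈ cellOf α β ∧ T p = v + 1 ∧ C ≤ p.2}
  rcases S.eq_empty_or_nonempty with hS | hS
  · have : occFromCol α β T (v + 1) C = 0 := by
      show S.ncard = 0
      rw [hS, Set.ncard_empty]
    omega
  obtain ⟨z, ⟨hz, hTz, hCz⟩, hmin⟩ :=
    Set.exists_min_image S Prod.snd (hfin.subset fun _ hp => hp.1) hS
  calc occFromCol α β T (v + 1) C ≤ occFromCol α β T (v + 1) z.2 :=
        Set.ncard_le_ncard (fun p hp => ⟨hp.1, hp.2.1, hmin p hp⟩) (hfin.subset fun _ hp => hp.1)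
    _ ≤ occBefore α β T (v + 1) z := hT.occFromCol_le_occBefore hα hz hTz.ge
    _ ≤ occFromCol α β T v z.2 := hT.occBefore_succ_le_occFromCol hα hlat _ z hz hTz rfl
    _ ≤ occFromCol α β T v C := occFromCol_antitone hfin v hCz

end ColumnCounts

/-- The analogue of `ShiftedYam` for suffixes of columns instead of prefixes of the reading
word; by `IsRp.isAntiSSkew_iff` it says that `Rp(T)` is anti-semistandard. -/
def ShiftedColDom (α β : ℕ → ℕ) (m : ℕ) (ω : ℕ → ℕ) (T : ℕ × ℕ → ℕ) : Prop :=
  ∀ i, 1 ≤ i → ∀ C,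
    ω (i + 1) + occFromCol α β T (m + i + 1) C ≤ ω i + occFromCol α β T (m + i) C

section Rp

variable {α β ω ν : ℕ → ℕ} {m : ℕ} {T Tm : ℕ × ℕ → ℕ}

theorem ShiftedColDom.add_occBefore_le (hdom : ShiftedColDom α β m ω T) (hT : IsSSkew α β T)
    (hα : IsPartition α) (hω : IsPartition ω) {i : ℕ} (hi : 1 ≤ i) (x : ℕ × ℕ) :
    ω (i + 1) + occBefore α β T (m + i + 1) x ≤ ω i + occBefore α β T (m + i) x := by
  have hfin := hα.finite_cellOf β
  rcases Nat.eq_zero_or_pos (occBefore α β T (m + i + 1) x) with ht | ht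
  · have := hω.antitone hi (Nat.le_add_right i 1)
    omega
  obtain ⟨z, hz, hTz, hzx, hzt⟩ := exists_occBefore_eq hfin ht le_rfl
  calc ω (i + 1) + occBefore α β T (m + i + 1) x
      = ω (i + 1) + occBefore α β T (m + i + 1) z := by rw [hzt]
    _ ≤ ω (i + 1) + occFromCol α β T (m + i + 1) z.2 :=
        Nat.add_le_add_left (hT.occBefore_le_occFromCol hα hz hTz le_rfl) _
    _ ≤ ω i + occFromCol α β T (m + i) z.2 := hdom i hi z.2
    _ ≤ ω i + occBefore α β T (m + i) z :=
        Nat.add_le_add_left (hT.occFromCol_le_occBefore hα hz (by omega)) _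
    _ ≤ ω i + occBefore α β T (m + i) x := Nat.add_le_add_left (occBefore_mono hfin hzx _) _

variable (hRp : IsRp α β m ω T Tm) (hα : IsPartition α) (hT : IsSSkew α β T)
  (hcont : ∀ i, 1 ≤ i → occCount α β T (m + i) = ν i - ω i)
include hRp hα hcont

theorem IsRp.exists_eq {i j : ℕ} (hi : 1 ≤ i) (hij : (i, j) ∈ cellOf ν ω) :
    ∃ z ∈ cellOf α β, T z = m + i ∧ occBefore α β T (m + i) z = j - ω i ∧ Tm (i, j) = z.2 := by
  have h₁ : ω i < j := hij.1
  have h₂ : j ≤ ν i := hij.2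
  obtain ⟨z, hz, hTz, hzk⟩ := exists_occBefore_eq_of_le_occCount (hα.finite_cellOf β)
    (k := j - ω i) (by omega) (by rw [hcont i hi]; omega)
  refine ⟨z, hz, hTz, hzk, ?_⟩
  have := hRp z hz i hi hTz
  rwa [hzk, Nat.add_sub_cancel' h₁.le] at this

include hT

theorem IsRp.rows_strictAnti (hν : ν 0 = 0) {i j j' : ℕ} (hj : (i, j) ∈ cellOf ν ω)
    (hj' : (i, j') ∈ cellOf ν ω) (hjj' : j < j') : Tm (i, j') < Tm (i, j) := by
  have hi : 1 ≤ i := one_le_fst_of_mem_cellOf hν hj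
  obtain ⟨z, hz, hTz, hzk, hTm⟩ := hRp.exists_eq hα hcont hi hj
  obtain ⟨z', hz', hTz', hz'k, hTm'⟩ := hRp.exists_eq hα hcont hi hj'
  have : ω i < j := hj.1
  have hlt : occBefore α β T (m + i) z < occBefore α β T (m + i) z' := by omega
  rw [hTm, hTm']
  exact hT.snd_lt_of_occBefore_lt hα hz hTz hz' hTz' hlt

theorem IsRp.shiftedColDom_of_cols_antitone (hν : IsPartition ν) (hω : IsPartition ω)
    (hanti : ∀ i j, (i, j) ∈ cellOf ν ω → (i + 1, j) ∈ cellOf ν ω → Tm (i + 1, j) ≤ Tm (i, j)) :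
    ShiftedColDom α β m ω T := by
  intro i hi C
  have hfin := hα.finite_cellOf β
  have hν' := hν.antitone hi (Nat.le_add_right i 1)
  have hω' := hω.antitone hi (Nat.le_add_right i 1)
  have ht : occFromCol α β T (m + i + 1) C ≤ ν (i + 1) - ω (i + 1) := by
    rw [← hcont (i + 1) (by omega)]
    exact Set.ncard_le_ncard (fun _ hp => ⟨hp.1, hp.2.1⟩) (hfin.subset fun _ hp => hp.1)
  set j := ω (i + 1) + occFromCol α β T (m + i + 1) C with hj
  by_cases hji : j ≤ ω i
  · omega
  have hcell₁ : (i + 1, j) ∈ cellOf ν ω :=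
    ⟨show ω (i + 1) < j by omega, show j ≤ ν (i + 1) by omega⟩
  have hcell₀ : (i, j) ∈ cellOf ν ω := ⟨show ω i < j by omega, show j ≤ ν i by omega⟩
  obtain ⟨z, hz, hTz, hzk, hTmz⟩ := hRp.exists_eq hα hcont (by omega) hcell₁
  rw [← Nat.add_assoc] at hTz hzk
  obtain ⟨z', hz', hTz', hz'k, hTmz'⟩ := hRp.exists_eq hα hcont hi hcell₀
  have hzC : C ≤ z.2 := (hT.occBefore_le_occFromCol_iff hα hz hTz).1 (by omega)
  have hz'C : C ≤ z'.2 := hzC.trans (hTmz ▸ hTmz' ▸ hanti i _ hcell₀ hcell₁)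
  have := hT.occBefore_le_occFromCol hα hz' hTz' hz'C
  omega

theorem IsRp.cols_antitone_of_shiftedColDom (hν : IsPartition ν) (hdom : ShiftedColDom α β m ω T)
    {i j : ℕ} (hj : (i, j) ∈ cellOf ν ω) (hj₁ : (i + 1, j) ∈ cellOf ν ω) :
    Tm (i + 1, j) ≤ Tm (i, j) := by
  have hi : 1 ≤ i := one_le_fst_of_mem_cellOf hν.1 hj
  obtain ⟨z, hz, hTz, hzk, hTmz⟩ := hRp.exists_eq hα hcont (by omega) hj₁
  rw [← Nat.add_assoc] at hTz hzk
  obtain ⟨z', hz', hTz', hz'k, hTmz'⟩ := hRp.exists_eq hα hcont hi hj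
  have : ω i < j := hj.1
  have : ω (i + 1) < j := hj₁.1
  rw [hTmz, hTmz', ← hT.occBefore_le_occFromCol_iff hα hz' hTz', hz'k]
  have := hdom i hi z.2
  have := hT.occBefore_le_occFromCol hα hz hTz le_rfl
  omega

theorem IsRp.isAntiSSkew_iff (hν : IsPartition ν) (hω : IsPartition ω) :
    IsAntiSSkew ν ω Tm ↔ ShiftedColDom α β m ω T := by
  refine ⟨fun h => hRp.shiftedColDom_of_cols_antitone hα hT hcont hν hω
    fun i j h₁ h₂ => h.2 i (i + 1) j h₁ h₂ (Nat.le_add_right i 1),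
    fun hdom => ⟨fun i j j' => hRp.rows_strictAnti hα hT hcont hν.1, ?_⟩⟩
  intro i i' j hi hi' hii'
  obtain ⟨d, rfl⟩ := Nat.exists_eq_add_of_le hii'
  induction d with
  | zero => exact le_rfl
  | succ d ih =>
    have hmid := mem_cellOf_of_le_of_le hν hω hi hi' (Nat.le_add_right i d) (by omega)
    exact (hRp.cols_antitone_of_shiftedColDom hα hT hcont hν hdom hmid hi').trans
      (ih hmid (Nat.le_add_right i d))

end Rp

section Hook

variable {m n : ℕ} {la μ : ℕ → ℕ} {T : ℕ × ℕ → ℕ}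

theorem mem_cellOf_lamPlus_iff (hla : IsPartition la) {p : ℕ × ℕ} :
    p ∈ cellOf (conjP (lamPlus m la)) (conjP μ) ↔ p ∈ cellOf (conjP la) (conjP μ) ∧ p.2 ≤ m := by
  simp only [cellOf, Set.mem_ofPred_eq]
  rcases Nat.eq_zero_or_pos p.1 with h | h
  · simp only [h, conjP_zero]
    omega
  · rw [conjP_lamPlus hla h]
    omega

/-- The cells of `λ′/μ′` in the columns `> m` form `λ′/(λ⁺)′` (the canonical cells), where `T` is
prescribed: its row `i` holds `ω i` copies of `m + i`. -/
theorem lt_snd_of_mem_cellOf_conjP_lamPlus (hla : IsPartition la) {p : ℕ × ℕ}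
    (hp : p ∈ cellOf (conjP la) (conjP (lamPlus m la))) : m < p.2 := by
  have hp₁ := one_le_fst_of_mem_cellOf (conjP_zero la) hp
  have := hp.1
  have := hp.2
  rw [conjP_lamPlus hla hp₁] at *
  omega

theorem le_add_fst_of_mem_cellOf_lamPlus (hla : IsPartition la) (hμ : IsPartition μ)
    (hlam : n ≤ la m) (hrange : ∀ p ∈ cellOf (conjP la) (conjP μ), T p ≤ m + n)
    (hSp : IsSSkew (conjP (lamPlus m la)) (conjP μ) T) {p : ℕ × ℕ}
    (hp : p ∈ cellOf (conjP (lamPlus m la)) (conjP μ)) : T p ≤ m + p.1 := by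
  obtain ⟨r, c⟩ := p
  obtain ⟨hpB, hcm⟩ := (mem_cellOf_lamPlus_iff hla).1 hp
  have hr : 1 ≤ r := one_le_fst_of_mem_cellOf (conjP_zero la) hpB
  have hc : 1 ≤ c := by have := hp.1; simp only at this; omega
  have hrc : r ≤ la c := (hla.le_conjP_iff hc hr).1 hpB.2
  have hbot : (r + (la c - r), c) ∈ cellOf (conjP (lamPlus m la)) (conjP μ) := by
    rw [Nat.add_sub_cancel' hrc, mem_cellOf_lamPlus_iff hla]
    exact ⟨⟨((isPartition_conjP hμ).antitone hr hrc).trans_lt hpB.1,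
      (hla.le_conjP_iff hc (by omega)).2 le_rfl⟩, hcm⟩
  have hcol := hSp.add_le_of_mem (isPartition_conjP (isPartition_lamPlus hla))
    (isPartition_conjP hμ) hp _ hbot
  have hbig := hrange _ ((mem_cellOf_lamPlus_iff hla).1 hbot).1
  have := hla.antitone hc hcm
  rw [Nat.add_sub_cancel' hrc] at hcol hbig
  simp only
  omega

theorem le_add_fst_of_mem_cellOf (hla : IsPartition la) (hμ : IsPartition μ)
    (hlam : n ≤ la m) (hrange : ∀ p ∈ cellOf (conjP la) (conjP μ), T p ≤ m + n)
    (hcanon : ∀ p ∈ cellOf (conjP la) (conjP μ), m < p.2 → T p = m + p.1)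
    (hSp : IsSSkew (conjP (lamPlus m la)) (conjP μ) T) :
    ∀ p ∈ cellOf (conjP la) (conjP μ), T p ≤ m + p.1 := by
  intro p hp
  rcases le_or_gt p.2 m with hpm | hpm
  · exact le_add_fst_of_mem_cellOf_lamPlus hla hμ hlam hrange hSp
      ((mem_cellOf_lamPlus_iff hla).2 ⟨hp, hpm⟩)
  · exact (hcanon p hp hpm).le

theorem isSSkew_of_lamPlus (hla : IsPartition la)
    (hcanon : ∀ p ∈ cellOf (conjP la) (conjP μ), m < p.2 → T p = m + p.1)
    (hSp : IsSSkew (conjP (lamPlus m la)) (conjP μ) T)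
    (hbound : ∀ p ∈ cellOf (conjP la) (conjP μ), T p ≤ m + p.1) :
    IsSSkew (conjP la) (conjP μ) T := by
  refine ⟨fun i j j' hj hj' hjj' => ?_, fun i i' j hi hi' hii' => ?_⟩
  · rcases le_or_gt j' m with hj'm | hj'm
    · exact hSp.1 i j j' ((mem_cellOf_lamPlus_iff hla).2 ⟨hj, by simp only; omega⟩)
        ((mem_cellOf_lamPlus_iff hla).2 ⟨hj', hj'm⟩) hjj'
    · rw [hcanon _ hj' hj'm]
      exact hbound _ hj
  · rcases le_or_gt j m with hjm | hjm
    · exact hSp.2 i i' j ((mem_cellOf_lamPlus_iff hla).2 ⟨hi, hjm⟩)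
        ((mem_cellOf_lamPlus_iff hla).2 ⟨hi', hjm⟩) hii'
    · rw [hcanon _ hi hjm, hcanon _ hi' hjm]
      simp only
      omega

theorem ncard_canonical_row (hla : IsPartition la) {i : ℕ} (hi : 1 ≤ i) :
    {p | p ∈ cellOf (conjP la) (conjP (lamPlus m la)) ∧ p.1 = i}.ncard = lamMinus m la i := by
  rw [ncard_cellOf_row, conjP_lamPlus hla hi, lamMinus_eq hla hi]
  omega

variable (hla : IsPartition la) (hμl : ∀ i, μ i ≤ lamPlus m la i)
  (hcanon : ∀ p ∈ cellOf (conjP la) (conjP μ), m < p.2 → T p = m + p.1)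
include hla hμl

theorem ncard_cellOf_sep_lamPlus_add (Q : ℕ × ℕ → Prop) :
    {p | p ∈ cellOf (conjP la) (conjP μ) ∧ Q p}.ncard
      = {p | p ∈ cellOf (conjP (lamPlus m la)) (conjP μ) ∧ Q p}.ncard
        + {p | p ∈ cellOf (conjP la) (conjP (lamPlus m la)) ∧ Q p}.ncard :=
  ncard_cellOf_sep_eq_add ((isPartition_conjP hla).finite_cellOf _)
    ((isPartition_lamPlus hla).conjP_le_conjP hμl) (hla.conjP_le_conjP (lamPlus_le m la)) Q

theorem occBefore_lamPlus_add (v : ℕ) (x : ℕ × ℕ) :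
    occBefore (conjP la) (conjP μ) T v x = occBefore (conjP (lamPlus m la)) (conjP μ) T v x
      + occBefore (conjP la) (conjP (lamPlus m la)) T v x :=
  ncard_cellOf_sep_lamPlus_add hla hμl _

theorem occFromCol_lamPlus_add (v C : ℕ) :
    occFromCol (conjP la) (conjP μ) T v C = occFromCol (conjP (lamPlus m la)) (conjP μ) T v C
      + occFromCol (conjP la) (conjP (lamPlus m la)) T v C :=
  ncard_cellOf_sep_lamPlus_add hla hμl _

include hcanon

theorem canonical_eq_iff {p : ℕ × ℕ} (hp : p ∈ cellOf (conjP la) (conjP (lamPlus m la))) {i : ℕ} :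
    T p = m + i ↔ p.1 = i := by
  have hpB : p ∈ cellOf (conjP la) (conjP μ) :=
    ⟨((isPartition_lamPlus hla).conjP_le_conjP hμl p.1).trans_lt hp.1, hp.2⟩
  rw [hcanon p hpB (lt_snd_of_mem_cellOf_conjP_lamPlus hla hp)]
  omega

theorem occBefore_canonical_le {i : ℕ} (hi : 1 ≤ i) (x : ℕ × ℕ) :
    occBefore (conjP la) (conjP (lamPlus m la)) T (m + i) x ≤ lamMinus m la i := by
  rw [← ncard_canonical_row hla hi]
  exact Set.ncard_le_ncard
    (fun _ ⟨hp, _, hTp⟩ => ⟨hp, (canonical_eq_iff hla hμl hcanon hp).1 hTp⟩)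
    (((isPartition_conjP hla).finite_cellOf _).subset fun _ hp => hp.1)

theorem occBefore_canonical_of_lt {i : ℕ} (hi : 1 ≤ i) {x : ℕ × ℕ} (hx : i < x.1) :
    occBefore (conjP la) (conjP (lamPlus m la)) T (m + i) x = lamMinus m la i := by
  rw [← ncard_canonical_row hla hi, occBefore]
  congr 1
  ext p
  refine ⟨fun ⟨hp, _, hTp⟩ => ⟨hp, (canonical_eq_iff hla hμl hcanon hp).1 hTp⟩,
    fun ⟨hp, hpi⟩ => ⟨hp, Or.inl (by omega), (canonical_eq_iff hla hμl hcanon hp).2 hpi⟩⟩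

theorem occFromCol_canonical {i : ℕ} (hi : 1 ≤ i) {C : ℕ} (hC : C ≤ m + 1) :
    occFromCol (conjP la) (conjP (lamPlus m la)) T (m + i) C = lamMinus m la i := by
  rw [← ncard_canonical_row hla hi, occFromCol]
  congr 1
  ext p
  refine ⟨fun ⟨hp, hTp, _⟩ => ⟨hp, (canonical_eq_iff hla hμl hcanon hp).1 hTp⟩,
    fun ⟨hp, hpi⟩ => ⟨hp, (canonical_eq_iff hla hμl hcanon hp).2 hpi, ?_⟩⟩
  have := lt_snd_of_mem_cellOf_conjP_lamPlus hla hp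
  omega

theorem shiftedColDom_of_lattice (hSb : IsSSkew (conjP la) (conjP μ) T)
    (hlat : IsLatticeFrom (conjP la) (conjP μ) T (m + 1)) :
    ShiftedColDom (conjP (lamPlus m la)) (conjP μ) m (lamMinus m la) T := by
  intro i hi C
  have hω := (isPartition_lamMinus hla (m := m)).antitone hi (Nat.le_add_right i 1)
  rcases le_or_gt C m with hC | hC
  · have hdom := hSb.occFromCol_succ_le (isPartition_conjP hla)
      (fun x hx => hlat x hx (m + i) (by omega)) C
    have h₀ := occFromCol_canonical hla hμl hcanon hi (C := C) (by omega)
    have h₁ := occFromCol_canonical hla hμl hcanon (i := i + 1) (by omega) (C := C) (by omega)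
    rw [← Nat.add_assoc] at h₁
    rw [occFromCol_lamPlus_add hla hμl, occFromCol_lamPlus_add hla hμl] at hdom
    omega
  · have : occFromCol (conjP (lamPlus m la)) (conjP μ) T (m + i + 1) C = 0 := by
      have hempty : {p | p ∈ cellOf (conjP (lamPlus m la)) (conjP μ) ∧ T p = m + i + 1 ∧ C ≤ p.2}
          = ∅ := Set.eq_empty_of_forall_notMem fun p ⟨hp, _, hCp⟩ => by
        have := ((mem_cellOf_lamPlus_iff hla).1 hp).2
        omega
      rw [occFromCol, hempty, Set.ncard_empty]
    omega

theorem lattice_of_shiftedColDom (hSp : IsSSkew (conjP (lamPlus m la)) (conjP μ) T)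
    (hbound : ∀ p ∈ cellOf (conjP la) (conjP μ), T p ≤ m + p.1)
    (hdom : ShiftedColDom (conjP (lamPlus m la)) (conjP μ) m (lamMinus m la) T) :
    IsLatticeFrom (conjP la) (conjP μ) T (m + 1) := by
  intro x hx v hv
  obtain ⟨i, rfl⟩ : ∃ i, v = m + i := ⟨v - m, by omega⟩
  have hi : 1 ≤ i := by omega
  rcases le_or_gt x.1 i with hxi | hxi
  · have := occBefore_eq_zero_of_lt hbound (x := x) (i := i + 1) (by omega)
    rw [← Nat.add_assoc] at this
    omega
  · have hP := hdom.add_occBefore_le hSp (isPartition_conjP (isPartition_lamPlus hla))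
      (isPartition_lamMinus hla) hi x
    have hK₁ := occBefore_canonical_le hla hμl hcanon (i := i + 1) (by omega) x
    rw [← Nat.add_assoc] at hK₁
    have hK₀ := occBefore_canonical_of_lt hla hμl hcanon hi hxi
    rw [occBefore_lamPlus_add hla hμl, occBefore_lamPlus_add hla hμl]
    omega

end Hook

theorem statement15_general (m n : ℕ) (la μ ν : ℕ → ℕ)
    (hla : IsPartition la)
    (hμ : IsPartition μ) (hμl : ∀ i, μ i ≤ lamPlus m la i)
    (hν : IsPartition ν)
    (hlam : n ≤ la m)
    (T : ℕ × ℕ → ℕ)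
    (hrange : ∀ p ∈ cellOf (conjP la) (conjP μ), m + 1 ≤ T p ∧ T p ≤ m + n)
    (hcanon : ∀ p ∈ cellOf (conjP la) (conjP μ), m < p.2 → T p = m + p.1)
    (hcontp : ∀ i, 1 ≤ i →
      occCount (conjP (lamPlus m la)) (conjP μ) T (m + i) = ν i - lamMinus m la i)
    (Tm : ℕ × ℕ → ℕ)
    (hRp : IsRp (conjP (lamPlus m la)) (conjP μ) m (lamMinus m la) T Tm) :
    (IsSSkew (conjP la) (conjP μ) T ∧ IsLatticeFrom (conjP la) (conjP μ) T (m + 1)) ↔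
      (IsSSkew (conjP (lamPlus m la)) (conjP μ) T ∧ IsAntiSSkew ν (lamMinus m la) Tm) := by
  have hP := isPartition_conjP (isPartition_lamPlus hla (m := m))
  constructor
  · rintro ⟨hSb, hlat⟩
    have hSp := hSb.mono_left (hla.conjP_le_conjP (lamPlus_le m la))
    refine ⟨hSp, (hRp.isAntiSSkew_iff hP hSp hcontp hν (isPartition_lamMinus hla)).2 ?_⟩
    exact shiftedColDom_of_lattice hla hμl hcanon hSb hlat
  · rintro ⟨hSp, hAnti⟩
    have hbound := le_add_fst_of_mem_cellOf hla hμ hlam (fun p hp => (hrange p hp).2) hcanon hSp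
    refine ⟨isSSkew_of_lamPlus hla hcanon hSp hbound, ?_⟩
    exact lattice_of_shiftedColDom hla hμl hcanon hSp hbound
      ((hRp.isAntiSSkew_iff hP hSp hcontp hν (isPartition_lamMinus hla)).1 hAnti)

/-- assume `λ⁺_m ≥ n`. Then `T` is a Littlewood–Richardson tableau
(semistandard with lattice reading word) if and only if `T⁺` is marked (`T⁺`
semistandard and `Rp(T⁺)` anti-semistandard). -/
theorem statement15 (m n : ℕ) (hm : 1 ≤ m) (hn : 1 ≤ n) (la μ ν : ℕ → ℕ)
    (hla : IsPartition la) (hook : la (m + 1) ≤ n)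
    (hμ : IsPartition μ) (hμl : ∀ i, μ i ≤ lamPlus m la i)
    (hν : IsPartition ν) (hνω : ∀ i, lamMinus m la i ≤ ν i)
    (hlam : n ≤ la m)
    (T : ℕ × ℕ → ℕ)
    (hrange : ∀ p ∈ cellOf (conjP la) (conjP μ), m + 1 ≤ T p ∧ T p ≤ m + n)
    (hcanon : ∀ p ∈ cellOf (conjP la) (conjP μ), m < p.2 → T p = m + p.1)
    (hcont : ∀ i, 1 ≤ i → occCount (conjP la) (conjP μ) T (m + i) = ν i)
    (hcontp : ∀ i, 1 ≤ i →
      occCount (conjP (lamPlus m la)) (conjP μ) T (m + i) = ν i - lamMinus m la i)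
    (Tm : ℕ × ℕ → ℕ)
    (hRp : IsRp (conjP (lamPlus m la)) (conjP μ) m (lamMinus m la) T Tm) :
    (IsSSkew (conjP la) (conjP μ) T ∧ IsLatticeFrom (conjP la) (conjP μ) T (m + 1)) ↔
      (IsSSkew (conjP (lamPlus m la)) (conjP μ) T ∧ IsAntiSSkew ν (lamMinus m la) Tm) :=
  statement15_general m n la μ ν hla hμ hμl hν hlam T hrange hcanon hcontp Tm hRp
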